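/- arXiv:2210.14745 — 5 statements merged into one kernel-verified Lean document; each statement's English description precedes it below -/
import Mathlib

section
/- In the causal model with edges X → Z, Z → Y, X → Y and latent confounder between X and Z, if P(Z_x = z, X = x') > 0, then the conditional counterfactual probability P(Y_x = y | Z_x = z, X = x') equals the interventional probability P(Y_{x,z} = y). -/
open MeasureTheory ProbabilityTheory

/-- In the SCM with `X = fX(U_XZ, U_X)`, `Z = fZ(X, U_XZ, U_Z)`, `Y = fY(X, Z, U_Y)`
(edges `X → Z`, `Z → Y`, `X → Y` and latent confounder `X ↔ Z`), with mutually
independent exogenous variables, if `P(Z_x = z, X = x') > 0` then the conditional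
counterfactual probability `P(Y_x = y | Z_x = z, X = x')` equals the interventional
probability `P(Y_{x,z} = y)`, where `Y_x = fY(x, Z_x, U_Y)`, `Z_x = fZ(x, U_XZ, U_Z)`
and `Y_{x,z} = fY(x, z, U_Y)`. -/
theorem conditional_counterfactual_eq_interventional
    {Ω : Type*} [MeasurableSpace Ω] (μ : Measure Ω) [IsProbabilityMeasure μ]
    {EXZ EX EZ EY XV ZV YV : Type*}
    [MeasurableSpace EXZ] [MeasurableSpace EX] [MeasurableSpace EZ] [MeasurableSpace EY]
    [MeasurableSpace XV] [MeasurableSpace ZV] [MeasurableSpace YV]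
    [MeasurableSingletonClass XV] [MeasurableSingletonClass ZV]
    [MeasurableSingletonClass YV]
    (UXZ : Ω → EXZ) (UX : Ω → EX) (UZ : Ω → EZ) (UY : Ω → EY)
    (fX : EXZ → EX → XV) (fZ : XV → EXZ → EZ → ZV) (fY : XV → ZV → EY → YV)
    (hUXZ : Measurable UXZ) (hUX : Measurable UX) (hUZ : Measurable UZ)
    (hUY : Measurable UY)
    (hfX : Measurable fun p : EXZ × EX => fX p.1 p.2)
    (hfZ : Measurable fun p : XV × EXZ × EZ => fZ p.1 p.2.1 p.2.2)
    (hfY : Measurable fun p : XV × ZV × EY => fY p.1 p.2.1 p.2.2)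
    (hindep : μ.map (fun ω => (UXZ ω, UX ω, UZ ω, UY ω)) =
      ((μ.map UXZ).prod ((μ.map UX).prod ((μ.map UZ).prod (μ.map UY)))))
    (x x' : XV) (z : ZV) (y : YV)
    (hpos : μ {ω | fZ x (UXZ ω) (UZ ω) = z ∧ fX (UXZ ω) (UX ω) = x'} ≠ 0) :
    (μ[|{ω | fZ x (UXZ ω) (UZ ω) = z ∧ fX (UXZ ω) (UX ω) = x'}])
        {ω | fY x (fZ x (UXZ ω) (UZ ω)) (UY ω) = y}
      = μ {ω | fY x z (UY ω) = y} := by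
  -- exogenous marginals are probability measures
  have i1 : IsProbabilityMeasure (μ.map UXZ) := Measure.isProbabilityMeasure_map hUXZ.aemeasurable
  have i2 : IsProbabilityMeasure (μ.map UX) := Measure.isProbabilityMeasure_map hUX.aemeasurable
  have i3 : IsProbabilityMeasure (μ.map UZ) := Measure.isProbabilityMeasure_map hUZ.aemeasurable
  have i4 : IsProbabilityMeasure (μ.map UY) := Measure.isProbabilityMeasure_map hUY.aemeasurable
  set W : Ω → EXZ × EX × EZ := fun ω => (UXZ ω, UX ω, UZ ω) with hWdef
  have hW : Measurable W := hUXZ.prodMk (hUX.prodMk hUZ)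
  -- the measurable equivalence reassociating the product
  let e : ((EXZ × EX × EZ) × EY) ≃ᵐ (EXZ × EX × EZ × EY) :=
    MeasurableEquiv.prodAssoc.trans
      ((MeasurableEquiv.refl EXZ).prodCongr MeasurableEquiv.prodAssoc)
  have he : ∀ p : (EXZ × EX × EZ) × EY, e p = (p.1.1, p.1.2.1, p.1.2.2, p.2) := fun p => rfl
  -- joint law of (W, UY) is the product of laws
  have hmapWY : μ.map (fun ω => (W ω, UY ω))
      = ((μ.map UXZ).prod ((μ.map UX).prod (μ.map UZ))).prod (μ.map UY) := by
    have h1 : (fun ω => (UXZ ω, UX ω, UZ ω, UY ω)) = e ∘ (fun ω => (W ω, UY ω)) := rfl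
    have h2 : μ.map (e ∘ fun ω => (W ω, UY ω))
        = (μ.map fun ω => (W ω, UY ω)).map e := by
      rw [Measure.map_map e.measurable (hW.prodMk hUY)]
    have h3 : Measure.map e
        (((μ.map UXZ).prod ((μ.map UX).prod (μ.map UZ))).prod (μ.map UY))
        = (μ.map UXZ).prod ((μ.map UX).prod ((μ.map UZ).prod (μ.map UY))) := by
      have : Measure.map (⇑((MeasurableEquiv.refl EXZ).prodCongr MeasurableEquiv.prodAssoc))
          ((μ.map UXZ).prod (((μ.map UX).prod (μ.map UZ)).prod (μ.map UY)))
          = (μ.map UXZ).prod ((μ.map UX).prod ((μ.map UZ).prod (μ.map UY))) := by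
        have hcoe : ⇑((MeasurableEquiv.refl EXZ).prodCongr MeasurableEquiv.prodAssoc)
            = Prod.map (id : EXZ → EXZ) ⇑(MeasurableEquiv.prodAssoc
              (α := EX) (β := EZ) (γ := EY)) := rfl
        rw [hcoe, ← Measure.map_prod_map _ _ measurable_id
            MeasurableEquiv.prodAssoc.measurable,
          Measure.map_id, Measure.prodAssoc_prod]
      calc Measure.map e (((μ.map UXZ).prod ((μ.map UX).prod (μ.map UZ))).prod (μ.map UY))
          = Measure.map (⇑((MeasurableEquiv.refl EXZ).prodCongr MeasurableEquiv.prodAssoc))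
            (Measure.map (⇑MeasurableEquiv.prodAssoc)
              (((μ.map UXZ).prod ((μ.map UX).prod (μ.map UZ))).prod (μ.map UY))) := by
            rw [Measure.map_map (MeasurableEquiv.measurable _)
              MeasurableEquiv.prodAssoc.measurable]; rfl
        _ = _ := by rw [Measure.prodAssoc_prod, this]
    apply MeasurableEquiv.map_measurableEquiv_injective e
    show Measure.map (⇑e) (μ.map fun ω => (W ω, UY ω)) = _
    rw [← h2, ← h1, hindep, h3]
  -- marginal of W
  have hmapW : μ.map W = (μ.map UXZ).prod ((μ.map UX).prod (μ.map UZ)) := by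
    have : μ.map W = (μ.map (fun ω => (W ω, UY ω))).map Prod.fst := by
      rw [Measure.map_map measurable_fst (hW.prodMk hUY)]; rfl
    rw [this, hmapWY, ← Measure.fst, Measure.fst_prod]
  -- independence of W and UY
  have hWUY : IndepFun W UY μ := by
    rw [indepFun_iff_map_prod_eq_prod_map_map hW.aemeasurable hUY.aemeasurable]
    rw [hmapWY, hmapW]
  -- the sets
  have hsZ : MeasurableSet {p : EXZ × EX × EZ | fZ x p.1 p.2.2 = z} := by
    have : Measurable fun p : EXZ × EX × EZ => fZ x p.1 p.2.2 :=
      hfZ.comp (measurable_const.prodMk (measurable_fst.prodMk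
        (measurable_snd.comp measurable_snd)))
    exact this (MeasurableSet.singleton z)
  have hsX : MeasurableSet {p : EXZ × EX × EZ | fX p.1 p.2.1 = x'} := by
    have : Measurable fun p : EXZ × EX × EZ => fX p.1 p.2.1 :=
      hfX.comp (measurable_fst.prodMk (measurable_fst.comp measurable_snd))
    exact this (MeasurableSet.singleton x')
  have hs : MeasurableSet {p : EXZ × EX × EZ | fZ x p.1 p.2.2 = z ∧ fX p.1 p.2.1 = x'} :=
    hsZ.inter hsX
  have ht : MeasurableSet {u : EY | fY x z u = y} := by
    have : Measurable fun u : EY => fY x z u :=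
      hfY.comp (measurable_const.prodMk (measurable_const.prodMk measurable_id))
    exact this (MeasurableSet.singleton y)
  set E : Set Ω := {ω | fZ x (UXZ ω) (UZ ω) = z ∧ fX (UXZ ω) (UX ω) = x'} with hEdef
  have hEeq : E = W ⁻¹' {p : EXZ × EX × EZ | fZ x p.1 p.2.2 = z ∧ fX p.1 p.2.1 = x'} := rfl
  have hEmeas : MeasurableSet E := hEeq ▸ hW hs
  set A : Set Ω := {ω | fY x z (UY ω) = y} with hAdef
  have hAeq : A = UY ⁻¹' {u : EY | fY x z u = y} := rfl
  -- independence applied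
  have hmul : μ (E ∩ A) = μ E * μ A := by
    rw [hEeq, hAeq]
    exact hWUY.measure_inter_preimage_eq_mul _ _ hs ht
  -- on E, fZ x (UXZ ω) (UZ ω) = z, so the counterfactual Y_x coincides with Y_{x,z}
  have hinter : E ∩ {ω | fY x (fZ x (UXZ ω) (UZ ω)) (UY ω) = y} = E ∩ A := by
    ext ω
    simp only [Set.mem_inter_iff, Set.mem_setOf_eq, hEdef, hAdef]
    constructor
    · rintro ⟨⟨hz, hx⟩, hy⟩; exact ⟨⟨hz, hx⟩, by rwa [hz] at hy⟩
    · rintro ⟨⟨hz, hx⟩, hy⟩; exact ⟨⟨hz, hx⟩, by rwa [hz]⟩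
  rw [cond_apply hEmeas, hinter, hmul, ← mul_assoc,
    ENNReal.inv_mul_cancel hpos (measure_ne_top μ E), one_mul]
end

section
/- Composition axiom: in a recursive structural causal model, for any exogenous realization u, intervention do(x) on a set X, and variables W, Y not in X, if W_x(u) = w then Y_{x,w}(u) = Y_x(u). That is, additionally intervening to set W to the value it would naturally attain under do(x) does not change the value of any other variable. -/
/-- Composition axiom: in a recursive structural causal model, for any exogenous
realization `u`, intervention `do(x)` on a set `S` with values `xv`, and variables
`W, Y ∉ S`, additionally intervening to set `W` to the value `W_x(u)` it would
naturally attain under `do(x)` does not change the value of `Y`: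
`Y_{x,w}(u) = Y_x(u)` where `w = W_x(u)`. Here `vx` is the solution of the submodel
`M_x` and `vxw` is the solution of the submodel `M_{x,w}`. -/
theorem scm_composition
    {ι U : Type*} [DecidableEq ι] (Val : ι → Type*) (pa : ι → ι → Prop)
    (F : ∀ i, (∀ j, Val j) → U → Val i)
    (hacyclic : WellFounded pa)
    (hloc : ∀ i (v w : ∀ j, Val j) (u : U), (∀ j, pa j i → v j = w j) → F i v u = F i w u)
    (u : U) (S : Set ι) [DecidablePred (· ∈ S)] (xv : ∀ i, Val i)
    (W Y : ι) (hW : W ∉ S) (hY : Y ∉ S)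
    (vx vxw : ∀ j, Val j)
    (hvx : ∀ i, vx i = if i ∈ S then xv i else F i vx u)
    (hvxw : ∀ i, vxw i =
      if i = W ∨ i ∈ S then Function.update xv W (vx W) i else F i vxw u) :
    vxw Y = vx Y := by
  suffices h : ∀ i, vxw i = vx i from h Y
  intro i
  induction i using hacyclic.induction with
  | _ i ih =>
    rw [hvxw i]
    by_cases hiW : i = W
    · subst hiW
      simp [hW, Function.update_self]
    · by_cases hiS : i ∈ S
      · rw [if_pos (Or.inr hiS), Function.update_of_ne hiW, hvx i, if_pos hiS]
      · rw [if_neg (by tauto), hvx i, if_neg hiS]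
        exact hloc i vxw vx u fun j hj => ih j hj
end

section
/- C-component factorization at the counterfactual level (special case): in the causal model with edges X → W, W → Y, D → Z, Z → Y and latent confounder X ↔ Y, the counterfactual probability P(Y_x = y, X = x', Z_d = z, D = d) equals Σ_w P_{w,z}(Y = y, X = x') · P_x(W = w) · P_d(Z = z) · P(D = d), where P_{a}(·) denotes the distribution under intervention do(a). -/
/-!
Splitting on the value `w` of `W_x`, consistency turns the event into
`{W_x = w, Y_{w,z} = y, X = x', Z_d = z, D = d}`. Once the confounder `U = u` is fixed, each
of these conditions constrains a different exogenous variable, so the `u`-slice of the event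
is a box in the product of the remaining exogenous laws. Only the `X`- and `Y`-sides of the
box depend on `u`; integrating over `u` turns them into `P(Y_{w,z} = y, X = x')` and leaves
the constant factors `P(W_x = w) · P(Z_d = z) · P(D = d)`.
-/

open MeasureTheory ENNReal

theorem measure_eq_sum_measure_preimage_singleton_inter {α β : Type*} [MeasurableSpace α]
    [MeasurableSpace β] [Fintype β] [MeasurableSingletonClass β] (μ : Measure α) {f : α → β}
    (hf : Measurable f) (s : Set α) : μ s = ∑ b, μ (f ⁻¹' {b} ∩ s) := by
  have := sum_measure_preimage_singleton (μ := μ.restrict s) Finset.univ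
    fun b _ => hf (measurableSet_singleton b)
  simpa [Measure.restrict_apply (hf (measurableSet_singleton _))] using this.symm

theorem MeasureTheory.Measure.prod_apply_eq_mul_of_slices {α β : Type*} [MeasurableSpace α]
    [MeasurableSpace β] (μ : Measure α) (ν : Measure β) [SFinite ν] {s t : Set (α × β)}
    (hs : MeasurableSet s) (ht : MeasurableSet t) (c : ℝ≥0∞)
    (h : ∀ a, ν (Prod.mk a ⁻¹' s) = ν (Prod.mk a ⁻¹' t) * c) :
    μ.prod ν s = μ.prod ν t * c := by
  simp only [Measure.prod_apply hs, Measure.prod_apply ht, h]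
  exact lintegral_mul_const c (measurable_measure_prodMk_left ht)

theorem measure_inter_preimage_eq_mul_of_map_eq_prod {Ω : Type*} [MeasurableSpace Ω]
    (μ : Measure Ω) [IsProbabilityMeasure μ] {EU EX EW ED EZ EY : Type*}
    [MeasurableSpace EU] [MeasurableSpace EX] [MeasurableSpace EW]
    [MeasurableSpace ED] [MeasurableSpace EZ] [MeasurableSpace EY]
    {U : Ω → EU} {UX : Ω → EX} {UW : Ω → EW} {UD : Ω → ED} {UZ : Ω → EZ} {UY : Ω → EY}
    (hU : Measurable U) (hUX : Measurable UX) (hUW : Measurable UW)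
    (hUD : Measurable UD) (hUZ : Measurable UZ) (hUY : Measurable UY)
    (hindep : μ.map (fun ω => (U ω, UX ω, UW ω, UD ω, UZ ω, UY ω)) =
      ((μ.map U).prod ((μ.map UX).prod ((μ.map UW).prod
        ((μ.map UD).prod ((μ.map UZ).prod (μ.map UY)))))))
    {AY : Set (EU × EY)} {AX : Set (EU × EX)} {BW : Set EW} {CZ : Set EZ} {CD : Set ED}
    (hAY : MeasurableSet AY) (hAX : MeasurableSet AX) (hBW : MeasurableSet BW)
    (hCZ : MeasurableSet CZ) (hCD : MeasurableSet CD) :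
    μ ({ω | (U ω, UY ω) ∈ AY ∧ (U ω, UX ω) ∈ AX} ∩ UW ⁻¹' BW ∩ UZ ⁻¹' CZ ∩ UD ⁻¹' CD) =
      μ {ω | (U ω, UY ω) ∈ AY ∧ (U ω, UX ω) ∈ AX} * μ (UW ⁻¹' BW) * μ (UZ ⁻¹' CZ) *
        μ (UD ⁻¹' CD) := by
  have : IsProbabilityMeasure (μ.map UW) := Measure.isProbabilityMeasure_map hUW.aemeasurable
  have : IsProbabilityMeasure (μ.map UD) := Measure.isProbabilityMeasure_map hUD.aemeasurable
  have : IsProbabilityMeasure (μ.map UZ) := Measure.isProbabilityMeasure_map hUZ.aemeasurable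
  set T := fun ω => (U ω, UX ω, UW ω, UD ω, UZ ω, UY ω)
  have hT : Measurable T := by fun_prop
  set ρ := (μ.map UX).prod ((μ.map UW).prod ((μ.map UD).prod ((μ.map UZ).prod (μ.map UY))))
  set t : Set (EU × EX × EW × ED × EZ × EY) := {p | (p.1, p.2.2.2.2.2) ∈ AY ∧ (p.1, p.2.1) ∈ AX}
  set s := t ∩ (fun p => p.2.2.1) ⁻¹' BW ∩ (fun p => p.2.2.2.2.1) ⁻¹' CZ ∩
    (fun p => p.2.2.2.1) ⁻¹' CD
  have ht : MeasurableSet t :=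
    (measurable_fst.prodMk measurable_snd.snd.snd.snd.snd hAY).inter
      (measurable_fst.prodMk measurable_snd.fst hAX)
  have hs : MeasurableSet s :=
    ((ht.inter (measurable_snd.snd.fst hBW)).inter (measurable_snd.snd.snd.snd.fst hCZ)).inter
      (measurable_snd.snd.snd.fst hCD)
  have hslice : ∀ u, ρ (Prod.mk u ⁻¹' s) =
      ρ (Prod.mk u ⁻¹' t) * (μ.map UW BW * μ.map UZ CZ * μ.map UD CD) := by
    intro u
    have hs_box : Prod.mk u ⁻¹' s =
        (Prod.mk u ⁻¹' AX) ×ˢ BW ×ˢ CD ×ˢ CZ ×ˢ (Prod.mk u ⁻¹' AY) := by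
      ext; simp only [s, t, Set.mem_preimage, Set.mem_inter_iff, Set.mem_ofPred_eq, Set.mem_prod]
      tauto
    have ht_box : Prod.mk u ⁻¹' t =
        (Prod.mk u ⁻¹' AX) ×ˢ Set.univ ×ˢ Set.univ ×ˢ Set.univ ×ˢ (Prod.mk u ⁻¹' AY) := by
      ext; simp only [t, Set.mem_preimage, Set.mem_ofPred_eq, Set.mem_prod, Set.mem_univ]
      tauto
    simp only [ρ, hs_box, ht_box, Measure.prod_prod, measure_univ]
    ring
  calc μ (T ⁻¹' s) = μ.map T s := (Measure.map_apply hT hs).symm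
    _ = μ.map T t * (μ.map UW BW * μ.map UZ CZ * μ.map UD CD) := by
      rw [hindep]; exact Measure.prod_apply_eq_mul_of_slices _ _ hs ht _ hslice
    _ = μ (T ⁻¹' t) * μ (UW ⁻¹' BW) * μ (UZ ⁻¹' CZ) * μ (UD ⁻¹' CD) := by
      rw [Measure.map_apply hT ht, Measure.map_apply hUW hBW, Measure.map_apply hUZ hCZ,
        Measure.map_apply hUD hCD]
      ring

/-- C-component factorization at the counterfactual level (special case): in the SCM
with `X = fX(U, U_X)`, `W = fW(X, U_W)`, `D = fD(U_D)`, `Z = fZ(D, U_Z)`,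
`Y = fY(W, Z, U, U_Y)` (edges `X → W`, `W → Y`, `D → Z`, `Z → Y`, latent confounder
`X ↔ Y`), with mutually independent exogenous variables (joint law = product of
marginals) and finite value domains,
`P(Y_x = y, X = x', Z_d = z, D = d)
  = Σ_w P_{w,z}(Y = y, X = x') · P_x(W = w) · P_d(Z = z) · P(D = d)`,
where potential outcomes are defined on the shared exogenous space, e.g.
`Y_x(ω) = fY(fW(x, U_W ω), fZ(fD(U_D ω), U_Z ω), U ω, U_Y ω)`. -/
theorem c_component_factorization_counterfactual
    {Ω : Type*} [MeasurableSpace Ω] (μ : Measure Ω) [IsProbabilityMeasure μ]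
    {EU EX EW ED EZ EY XV WV DV ZV YV : Type*}
    [Fintype WV]
    [MeasurableSpace EU] [MeasurableSpace EX] [MeasurableSpace EW]
    [MeasurableSpace ED] [MeasurableSpace EZ] [MeasurableSpace EY]
    [MeasurableSpace XV] [MeasurableSpace WV] [MeasurableSpace DV]
    [MeasurableSpace ZV] [MeasurableSpace YV]
    [MeasurableSingletonClass XV] [MeasurableSingletonClass WV]
    [MeasurableSingletonClass DV] [MeasurableSingletonClass ZV]
    [MeasurableSingletonClass YV]
    (U : Ω → EU) (UX : Ω → EX) (UW : Ω → EW) (UD : Ω → ED) (UZ : Ω → EZ)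
    (UY : Ω → EY)
    (fX : EU → EX → XV) (fW : XV → EW → WV) (fD : ED → DV) (fZ : DV → EZ → ZV)
    (fY : WV → ZV → EU → EY → YV)
    (hU : Measurable U) (hUX : Measurable UX) (hUW : Measurable UW)
    (hUD : Measurable UD) (hUZ : Measurable UZ) (hUY : Measurable UY)
    (hfX : Measurable fun p : EU × EX => fX p.1 p.2)
    (hfW : Measurable fun p : XV × EW => fW p.1 p.2)
    (hfD : Measurable fD)
    (hfZ : Measurable fun p : DV × EZ => fZ p.1 p.2)
    (hfY : Measurable fun p : WV × ZV × EU × EY => fY p.1 p.2.1 p.2.2.1 p.2.2.2)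
    (hindep : μ.map (fun ω => (U ω, UX ω, UW ω, UD ω, UZ ω, UY ω)) =
      ((μ.map U).prod ((μ.map UX).prod ((μ.map UW).prod
        ((μ.map UD).prod ((μ.map UZ).prod (μ.map UY)))))))
    (x x' : XV) (y : YV) (z : ZV) (d : DV) :
    μ {ω | fY (fW x (UW ω)) (fZ (fD (UD ω)) (UZ ω)) (U ω) (UY ω) = y ∧
        fX (U ω) (UX ω) = x' ∧ fZ d (UZ ω) = z ∧ fD (UD ω) = d}
      = ∑ w : WV,
          μ {ω | fY w z (U ω) (UY ω) = y ∧ fX (U ω) (UX ω) = x'} *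
            μ {ω | fW x (UW ω) = w} *
            μ {ω | fZ d (UZ ω) = z} *
            μ {ω | fD (UD ω) = d} := by
  have hW : Measurable fun e => fW x e := hfW.comp (measurable_const.prodMk measurable_id)
  have hZ : Measurable fun e => fZ d e := hfZ.comp (measurable_const.prodMk measurable_id)
  have hY : ∀ w, Measurable fun p : EU × EY => fY w z p.1 p.2 := fun w =>
    hfY.comp (measurable_const.prodMk (measurable_const.prodMk measurable_id))
  rw [measure_eq_sum_measure_preimage_singleton_inter μ (f := fun ω => fW x (UW ω))
    (hW.comp hUW)]
  refine Finset.sum_congr rfl fun w _ => ?_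
  have consistency : (fun ω => fW x (UW ω)) ⁻¹' {w} ∩
      {ω | fY (fW x (UW ω)) (fZ (fD (UD ω)) (UZ ω)) (U ω) (UY ω) = y ∧
        fX (U ω) (UX ω) = x' ∧ fZ d (UZ ω) = z ∧ fD (UD ω) = d} =
      {ω | fY w z (U ω) (UY ω) = y ∧ fX (U ω) (UX ω) = x'} ∩ {ω | fW x (UW ω) = w} ∩
        {ω | fZ d (UZ ω) = z} ∩ {ω | fD (UD ω) = d} := by
    ext ω
    simp only [Set.mem_inter_iff, Set.mem_preimage, Set.mem_singleton_iff, Set.mem_ofPred_eq]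
    grind
  rw [consistency]
  exact measure_inter_preimage_eq_mul_of_map_eq_prod μ hU hUX hUW hUD hUZ hUY hindep
    (hY w (measurableSet_singleton y)) (hfX (measurableSet_singleton x'))
    (hW (measurableSet_singleton w)) (hZ (measurableSet_singleton z))
    (hfD (measurableSet_singleton d))
end

section
/- In the causal model with edges X → Z, Z → Y, X → Y and latent confounder X ↔ Z, the conditional counterfactual P(Y_x = y | Z_x = z, X = x') equals the observational conditional probability P(Y = y | X = x, Z = z), provided both conditioning events have positive probability. -/
/-!
Once `Z_x = z` is fixed, `Y_x = fY(x, z, U_Y)`; on the event `X = x, Z = z` also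
`Y = fY(x, z, U_Y)`. Both conditioning events are determined by `(U_XZ, U_X, U_Z)`, which is
independent of `U_Y`, so both sides equal the unconditional probability
`P(fY(x, z, U_Y) = y)`.
-/

open MeasureTheory ProbabilityTheory

namespace MeasureTheory.Measure

variable {α β γ δ : Type*} [MeasurableSpace α] [MeasurableSpace β] [MeasurableSpace γ]
  [MeasurableSpace δ]

theorem map_prod_prod_prod_reassoc (μa : Measure α) (μb : Measure β) (μc : Measure γ)
    (μd : Measure δ) [SFinite μa] [SFinite μb] [SFinite μc] [SFinite μd] :
    (μa.prod (μb.prod (μc.prod μd))).map (fun p => ((p.1, p.2.1, p.2.2.1), p.2.2.2)) =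
      (μa.prod (μb.prod μc)).prod μd :=
  ((measurePreserving_prodAssoc μa (μb.prod μc) μd).symm.comp
    ((MeasurePreserving.id μa).prod (measurePreserving_prodAssoc μb μc μd).symm)).map_eq

end MeasureTheory.Measure

namespace ProbabilityTheory

variable {Ω α β : Type*} [MeasurableSpace Ω] [MeasurableSpace α] [MeasurableSpace β]
  {μ : Measure Ω}

theorem indepFun_of_map_prodMk_eq_prod [IsFiniteMeasure μ] {f : Ω → α} {g : Ω → β}
    (hf : Measurable f) (hg : Measurable g) {ν₁ : Measure α} {ν₂ : Measure β}
    [IsProbabilityMeasure ν₁] [IsProbabilityMeasure ν₂]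
    (h : μ.map (fun ω => (f ω, g ω)) = ν₁.prod ν₂) :
    IndepFun f g μ := by
  have hmap_fst : μ.map f = ν₁ := by
    rw [← (by simp : (ν₁.prod ν₂).map Prod.fst = ν₁), ← h,
      Measure.map_map measurable_fst (hf.prodMk hg)]
    rfl
  have hmap_snd : μ.map g = ν₂ := by
    rw [← (by simp : (ν₁.prod ν₂).map Prod.snd = ν₂), ← h,
      Measure.map_map measurable_snd (hf.prodMk hg)]
    rfl
  rw [indepFun_iff_map_prod_eq_prod_map_map hf.aemeasurable hg.aemeasurable, h, hmap_fst,
    hmap_snd]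

theorem indepFun_prodMk₃_of_map_eq_prod₄ [IsProbabilityMeasure μ]
    {E₁ E₂ E₃ E₄ : Type*} [MeasurableSpace E₁] [MeasurableSpace E₂] [MeasurableSpace E₃]
    [MeasurableSpace E₄] {U₁ : Ω → E₁} {U₂ : Ω → E₂} {U₃ : Ω → E₃} {U₄ : Ω → E₄}
    (hU₁ : Measurable U₁) (hU₂ : Measurable U₂) (hU₃ : Measurable U₃) (hU₄ : Measurable U₄)
    (h : μ.map (fun ω => (U₁ ω, U₂ ω, U₃ ω, U₄ ω)) =
      (μ.map U₁).prod ((μ.map U₂).prod ((μ.map U₃).prod (μ.map U₄)))) :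
    IndepFun (fun ω => (U₁ ω, U₂ ω, U₃ ω)) U₄ μ := by
  have := Measure.isProbabilityMeasure_map (μ := μ) hU₁.aemeasurable
  have := Measure.isProbabilityMeasure_map (μ := μ) hU₂.aemeasurable
  have := Measure.isProbabilityMeasure_map (μ := μ) hU₃.aemeasurable
  have := Measure.isProbabilityMeasure_map (μ := μ) hU₄.aemeasurable
  refine indepFun_of_map_prodMk_eq_prod (ν₁ := (μ.map U₁).prod ((μ.map U₂).prod (μ.map U₃)))
    (ν₂ := μ.map U₄) (hU₁.prodMk (hU₂.prodMk hU₃)) hU₄ ?_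
  rw [← Measure.map_prod_prod_prod_reassoc, ← h,
    Measure.map_map (by fun_prop) (hU₁.prodMk (hU₂.prodMk (hU₃.prodMk hU₄)))]
  rfl

theorem IndepFun.cond_preimage_apply [IsFiniteMeasure μ] {f : Ω → α} {g : Ω → β}
    (hfg : IndepFun f g μ) (hf : Measurable f) {s : Set α} {t : Set β} (hs : MeasurableSet s)
    (ht : MeasurableSet t) (hμs : μ (f ⁻¹' s) ≠ 0) :
    μ[g ⁻¹' t | f ⁻¹' s] = μ (g ⁻¹' t) := by
  rw [cond_apply (hf hs), hfg.measure_inter_preimage_eq_mul s t hs ht, ← mul_assoc,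
    ENNReal.inv_mul_cancel hμs (measure_ne_top μ _), one_mul]

theorem cond_congr_of_inter_eq {s t t' : Set Ω} (hs : MeasurableSet s) (h : s ∩ t = s ∩ t') :
    μ[t | s] = μ[t' | s] := by
  rw [← cond_inter_self hs, h, cond_inter_self hs]

end ProbabilityTheory

/-- In the SCM with `X = fX(U_XZ, U_X)`, `Z = fZ(X, U_XZ, U_Z)`, `Y = fY(X, Z, U_Y)`
(edges `X → Z`, `Z → Y`, `X → Y` and latent confounder `X ↔ Z`), with mutually
independent exogenous variables, the conditional counterfactual
`P(Y_x = y | Z_x = z, X = x')` equals the observational conditional probability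
`P(Y = y | X = x, Z = z)`, provided both conditioning events have positive
probability. -/
theorem conditional_counterfactual_eq_observational
    {Ω : Type*} [MeasurableSpace Ω] (μ : Measure Ω) [IsProbabilityMeasure μ]
    {EXZ EX EZ EY XV ZV YV : Type*}
    [MeasurableSpace EXZ] [MeasurableSpace EX] [MeasurableSpace EZ] [MeasurableSpace EY]
    [MeasurableSpace XV] [MeasurableSpace ZV] [MeasurableSpace YV]
    [MeasurableSingletonClass XV] [MeasurableSingletonClass ZV]
    [MeasurableSingletonClass YV]
    (UXZ : Ω → EXZ) (UX : Ω → EX) (UZ : Ω → EZ) (UY : Ω → EY)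
    (fX : EXZ → EX → XV) (fZ : XV → EXZ → EZ → ZV) (fY : XV → ZV → EY → YV)
    (hUXZ : Measurable UXZ) (hUX : Measurable UX) (hUZ : Measurable UZ)
    (hUY : Measurable UY)
    (hfX : Measurable fun p : EXZ × EX => fX p.1 p.2)
    (hfZ : Measurable fun p : XV × EXZ × EZ => fZ p.1 p.2.1 p.2.2)
    (hfY : Measurable fun p : XV × ZV × EY => fY p.1 p.2.1 p.2.2)
    (hindep : μ.map (fun ω => (UXZ ω, UX ω, UZ ω, UY ω)) =
      ((μ.map UXZ).prod ((μ.map UX).prod ((μ.map UZ).prod (μ.map UY)))))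
    (x x' : XV) (z : ZV) (y : YV)
    (hpos₁ : μ {ω | fZ x (UXZ ω) (UZ ω) = z ∧ fX (UXZ ω) (UX ω) = x'} ≠ 0)
    (hpos₂ : μ {ω | fX (UXZ ω) (UX ω) = x ∧
        fZ (fX (UXZ ω) (UX ω)) (UXZ ω) (UZ ω) = z} ≠ 0) :
    (μ[|{ω | fZ x (UXZ ω) (UZ ω) = z ∧ fX (UXZ ω) (UX ω) = x'}])
        {ω | fY x (fZ x (UXZ ω) (UZ ω)) (UY ω) = y}
      = (μ[|{ω | fX (UXZ ω) (UX ω) = x ∧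
            fZ (fX (UXZ ω) (UX ω)) (UXZ ω) (UZ ω) = z}])
          {ω | fY (fX (UXZ ω) (UX ω)) (fZ (fX (UXZ ω) (UX ω)) (UXZ ω) (UZ ω)) (UY ω) = y}
      := by
  let W : Ω → EXZ × EX × EZ := fun ω => (UXZ ω, UX ω, UZ ω)
  have hW : Measurable W := hUXZ.prodMk (hUX.prodMk hUZ)
  have hWY : IndepFun W UY μ := indepFun_prodMk₃_of_map_eq_prod₄ hUXZ hUX hUZ hUY hindep
  have hX : Measurable fun p : EXZ × EX × EZ => fX p.1 p.2.1 :=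
    hfX.comp (f := fun p : EXZ × EX × EZ => (p.1, p.2.1)) (by fun_prop)
  have hZx : Measurable fun p : EXZ × EX × EZ => fZ x p.1 p.2.2 :=
    hfZ.comp (f := fun p : EXZ × EX × EZ => (x, p.1, p.2.2)) (by fun_prop)
  have hZ : Measurable fun p : EXZ × EX × EZ => fZ (fX p.1 p.2.1) p.1 p.2.2 :=
    hfZ.comp (hX.prodMk (g := fun p : EXZ × EX × EZ => (p.1, p.2.2)) (by fun_prop))
  let S₁ : Set (EXZ × EX × EZ) := {p | fZ x p.1 p.2.2 = z ∧ fX p.1 p.2.1 = x'}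
  let S₂ : Set (EXZ × EX × EZ) := {p | fX p.1 p.2.1 = x ∧ fZ (fX p.1 p.2.1) p.1 p.2.2 = z}
  let T : Set EY := {e | fY x z e = y}
  have hS₁ : MeasurableSet S₁ :=
    (hZx (measurableSet_singleton z)).inter (hX (measurableSet_singleton x'))
  have hS₂ : MeasurableSet S₂ :=
    (hX (measurableSet_singleton x)).inter (hZ (measurableSet_singleton z))
  have hT : MeasurableSet T :=
    hfY.comp (f := fun e : EY => (x, z, e)) (by fun_prop) (measurableSet_singleton y)
  have hY₁ : W ⁻¹' S₁ ∩ {ω | fY x (fZ x (UXZ ω) (UZ ω)) (UY ω) = y} = W ⁻¹' S₁ ∩ UY ⁻¹' T := by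
    ext ω
    simp +contextual [W, S₁, T]
  have hY₂ : W ⁻¹' S₂ ∩ {ω | fY (fX (UXZ ω) (UX ω)) (fZ (fX (UXZ ω) (UX ω)) (UXZ ω) (UZ ω))
      (UY ω) = y} = W ⁻¹' S₂ ∩ UY ⁻¹' T := by
    ext ω
    simp +contextual [W, S₂, T]
  calc _ = μ[UY ⁻¹' T | W ⁻¹' S₁] := cond_congr_of_inter_eq (hW hS₁) hY₁
    _ = μ (UY ⁻¹' T) := hWY.cond_preimage_apply hW hS₁ hT hpos₁
    _ = μ[UY ⁻¹' T | W ⁻¹' S₂] := (hWY.cond_preimage_apply hW hS₂ hT hpos₂).symm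
    _ = _ := (cond_congr_of_inter_eq (hW hS₂) hY₂).symm
end

section
/- Exclusion/removal of redundant subscripts: in a recursive structural causal model with causal diagram G, if a variable W in the intervention set of a counterfactual Y_{x,w} is not an ancestor of Y in the graph G with incoming edges to the intervened set removed, then Y_{x,w}(u) = Y_x(u) for all exogenous realizations u. -/
/-- Exclusion of redundant subscripts: in a recursive structural causal model with
parent relation `pa`, if a variable `W` in the intervention set of a counterfactual
`Y_{x,w}` is not an ancestor of `Y` in the mutilated graph where incoming edges to the
intervened set `S ∪ {W}` are removed, then `Y_{x,w}(u) = Y_x(u)` for every exogenous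
realization `u` (and any value `xw` assigned to `W`). -/
theorem scm_exclusion_redundant_subscript
    {ι U : Type*} [DecidableEq ι] (Val : ι → Type*) (pa : ι → ι → Prop)
    (F : ∀ i, (∀ j, Val j) → U → Val i)
    (hacyclic : WellFounded pa)
    (hloc : ∀ i (v w : ∀ j, Val j) (u : U), (∀ j, pa j i → v j = w j) → F i v u = F i w u)
    (u : U) (S : Set ι) [DecidablePred (· ∈ S)] (xv : ∀ i, Val i)
    (W Y : ι) (hW : W ∉ S) (hY : Y ∉ S) (xw : Val W)
    (hnotanc : ¬ Relation.ReflTransGen (fun j i => pa j i ∧ ¬ (i = W ∨ i ∈ S)) W Y)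
    (vx vxw : ∀ j, Val j)
    (hvx : ∀ i, vx i = if i ∈ S then xv i else F i vx u)
    (hvxw : ∀ i, vxw i =
      if i = W ∨ i ∈ S then Function.update xv W xw i else F i vxw u) :
    vxw Y = vx Y := by
  set r : ι → ι → Prop := fun j i => pa j i ∧ ¬ (i = W ∨ i ∈ S) with hr
  suffices h : ∀ i, ¬ Relation.ReflTransGen r W i → vxw i = vx i from h Y hnotanc
  intro i
  induction i using hacyclic.induction with
  | _ i ih =>
    intro hi
    have hiW : i ≠ W := fun h => hi (h ▸ Relation.ReflTransGen.refl)
    by_cases hiS : i ∈ S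
    · rw [hvxw i, hvx i, if_pos (Or.inr hiS), if_pos hiS,
        Function.update_of_ne hiW]
    · rw [hvxw i, hvx i, if_neg (by tauto), if_neg hiS]
      apply hloc
      intro j hj
      apply ih j hj
      intro hWj
      exact hi (hWj.tail ⟨hj, by tauto⟩)
end
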